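/- Let V be a finite set, let n ≥ 1, let w : V → ℝ be a nonnegative function, and let r be a nonnegative integer with r ≤ n·|V|. Define f : 2^{V × {1,…,n}} → ℝ ∪ {+∞} by f(S) = Σ_{v ∈ ⋂_{i=1}^n X_i(S)} w(v) if |S| = r and f(S) = +∞ otherwise, where X_i(S) = {v ∈ V : (v,i) ∈ S}. Then f is a valuated matroid: its effective domain (the r-element subsets of V × {1,…,n}) is nonempty, and for all S, T with |S| = |T| = r and every a ∈ S \ T there exists b ∈ T \ S such that f(S) + f(T) ≥ f((S \ {a}) ∪ {b}) + f((T \ {b}) ∪ {a}). -/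

import Mathlib

/-!
Write `F(U) = ⋂ᵢ Xᵢ(U)`. Exchanging `a ∈ S \ T` against `b ∈ T \ S` only affects whether `a.1`
and `b.1` lie in these intersections, and `a.1 ∉ F(S - a + b)`, `b.1 ∉ F(T - b + a)`. Hence the
intersection of the new `F`'s lies in that of the old ones, and since `w ≥ 0` the exchange
inequality holds once the union does too, i.e. once `a.1 ∈ F(T - b + a) → a.1 ∈ F(S)` and
`b.1 ∈ F(S - a + b) → b.1 ∈ F(T)`. If the fibre of `a.1` meets `T \ S`, any `b` in it works.
Otherwise the first implication is automatic, and counting gives a `b` satisfying the second.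
-/

open Finset

theorem sum_add_sum_le_of_inter_subset_of_union_subset {α β : Type*} [DecidableEq α]
    [AddCommMonoid β] [PartialOrder β] [IsOrderedAddMonoid β] {w : α → β} (hw : ∀ v, 0 ≤ w v)
    {A B A' B' : Finset α} (hinter : A' ∩ B' ⊆ A ∩ B) (hunion : A' ∪ B' ⊆ A ∪ B) :
    ∑ v ∈ A', w v + ∑ v ∈ B', w v ≤ ∑ v ∈ A, w v + ∑ v ∈ B, w v := by
  rw [← sum_union_inter, ← sum_union_inter (s₁ := A)]
  exact add_le_add (sum_le_sum_of_subset_of_nonneg hunion fun v _ _ ↦ hw v)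
    (sum_le_sum_of_subset_of_nonneg hinter fun v _ _ ↦ hw v)

section FullFibers

variable {V ι β : Type*} [Fintype V] [DecidableEq V] [Fintype ι] [DecidableEq ι]
  [AddCommMonoid β] [PartialOrder β] [IsOrderedAddMonoid β]

/-- `⋂ᵢ Xᵢ(U)` in the paper. -/
def fullFibers (U : Finset (V × ι)) : Finset V :=
  univ.filter fun v ↦ ∀ k, (v, k) ∈ U

theorem mem_fullFibers {U : Finset (V × ι)} {v : V} : v ∈ fullFibers U ↔ ∀ k, (v, k) ∈ U := by
  simp [fullFibers]

theorem fullFibers_exchange_subset (U : Finset (V × ι)) (a b : V × ι) :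
    fullFibers (insert b (U.erase a)) ⊆ insert b.1 (fullFibers U) := by
  intro v hv
  rw [mem_insert, mem_fullFibers]
  refine or_iff_not_imp_left.2 fun hvb k ↦ ?_
  obtain hk | hk := mem_insert.1 (mem_fullFibers.1 hv k)
  · exact absurd (congrArg Prod.fst hk) hvb
  · exact mem_of_mem_erase hk

theorem fst_notMem_fullFibers_exchange (U : Finset (V × ι)) {a b : V × ι} (hab : a ≠ b) :
    a.1 ∉ fullFibers (insert b (U.erase a)) := fun h ↦ by
  simpa [hab] using mem_fullFibers.1 h a.2

theorem sum_fullFibers_exchange_le {w : V → β} (hw : ∀ v, 0 ≤ w v) {S T : Finset (V × ι)}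
    {a b : V × ι} (hab : a ≠ b)
    (ha : a.1 ∈ fullFibers (insert a (T.erase b)) → a.1 ∈ fullFibers S)
    (hb : b.1 ∈ fullFibers (insert b (S.erase a)) → b.1 ∈ fullFibers T) :
    ∑ v ∈ fullFibers (insert b (S.erase a)), w v + ∑ v ∈ fullFibers (insert a (T.erase b)), w v ≤
      ∑ v ∈ fullFibers S, w v + ∑ v ∈ fullFibers T, w v := by
  have hS := fullFibers_exchange_subset S a b
  have hT := fullFibers_exchange_subset T b a
  refine sum_add_sum_le_of_inter_subset_of_union_subset hw (fun v hv ↦ ?_) (fun v hv ↦ ?_)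
  · obtain ⟨hvS, hvT⟩ := mem_inter.1 hv
    have hva : v ≠ a.1 := by rintro rfl; exact fst_notMem_fullFibers_exchange S hab hvS
    have hvb : v ≠ b.1 := by rintro rfl; exact fst_notMem_fullFibers_exchange T hab.symm hvT
    exact mem_inter.2 ⟨(mem_insert.1 (hS hvS)).resolve_left hvb,
      (mem_insert.1 (hT hvT)).resolve_left hva⟩
  · rw [mem_union] at hv ⊢
    rcases hv with hvS | hvT
    · obtain rfl | hv := mem_insert.1 (hS hvS)
      exacts [Or.inr (hb hvS), Or.inl hv]
    · obtain rfl | hv := mem_insert.1 (hT hvT)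
      exacts [Or.inl (ha hvT), Or.inr hv]

/-- Among `b ∈ T \ S`, those whose fibre becomes full in `S - a + b` without being full in `T`
are injected into `(S \ T).erase a` by replacing `b` with a point of its fibre missing from `T`;
so for `|S| = |T|` they cannot exhaust `T \ S`. -/
theorem exists_exchange_fullFibers_imp {S T : Finset (V × ι)} (hcard : #S = #T) {a : V × ι}
    (ha : a ∈ S \ T) :
    ∃ b ∈ T \ S, b.1 ∈ fullFibers (insert b (S.erase a)) → b.1 ∈ fullFibers T := by
  set bad := (T \ S).filter fun b ↦
    b.1 ∈ fullFibers (insert b (S.erase a)) ∧ b.1 ∉ fullFibers T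
  have hbad : #bad ≤ #((S \ T).erase a) := by
    refine card_le_card_of_forall_subsingleton (fun b c ↦ c.1 = b.1) (fun b hb ↦ ?_) ?_
    · simp only [bad, mem_filter, mem_sdiff, mem_fullFibers, not_forall] at hb
      obtain ⟨⟨hbT, -⟩, hfull, k, hk⟩ := hb
      have hkb : (b.1, k) ≠ b := by rintro h; exact hk (h ▸ hbT)
      have hkS := mem_erase.1 ((mem_insert.1 (hfull k)).resolve_left hkb)
      exact ⟨(b.1, k), mem_erase.2 ⟨hkS.1, mem_sdiff.2 ⟨hkS.2, hk⟩⟩, rfl⟩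
    · rintro c - ⟨y, j⟩ ⟨hb, rfl⟩ ⟨y', j'⟩ ⟨hb', rfl : c.1 = y'⟩
      simp only [bad, mem_filter, mem_sdiff, mem_fullFibers] at hb hb'
      by_contra hne
      have hb'S := (mem_insert.1 (hb.2.1 j')).resolve_left fun h ↦ hne h.symm
      exact hb'.1.2 (mem_of_mem_erase hb'S)
  have hlt : #bad < #(T \ S) := by
    rw [← card_sdiff_comm hcard, ← card_erase_add_one ha]
    omega
  obtain ⟨b, hbTS, hbad⟩ := exists_mem_notMem_of_card_lt_card hlt
  exact ⟨b, hbTS, fun h ↦ by_contra fun h' ↦ hbad (mem_filter.2 ⟨hbTS, h, h'⟩)⟩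

theorem exists_exchange_sum_fullFibers_le {w : V → β} (hw : ∀ v, 0 ≤ w v)
    {S T : Finset (V × ι)} (hcard : #S = #T) {a : V × ι} (ha : a ∈ S \ T) :
    ∃ b ∈ T \ S, ∑ v ∈ fullFibers (insert b (S.erase a)), w v +
      ∑ v ∈ fullFibers (insert a (T.erase b)), w v ≤
        ∑ v ∈ fullFibers S, w v + ∑ v ∈ fullFibers T, w v := by
  have hne : ∀ b ∈ T \ S, a ≠ b := fun b hb h ↦ (mem_sdiff.1 ha).2 (h ▸ (mem_sdiff.1 hb).1)
  by_cases hfib : ∃ j, (a.1, j) ∈ T \ S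
  · obtain ⟨j, hj⟩ := hfib
    refine ⟨(a.1, j), hj, sum_fullFibers_exchange_le hw (hne _ hj) (fun h ↦ ?_) (fun h ↦ ?_)⟩
    · exact absurd h (fst_notMem_fullFibers_exchange T (hne _ hj).symm)
    · exact absurd h (fst_notMem_fullFibers_exchange S (hne _ hj))
  · obtain ⟨b, hb, hbfull⟩ := exists_exchange_fullFibers_imp hcard ha
    refine ⟨b, hb, sum_fullFibers_exchange_le hw (hne b hb) (fun h ↦ ?_) hbfull⟩
    -- the fibre of `a.1` in `T` already lies in `S`, so adding `a` cannot make it full outside `S`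
    refine mem_fullFibers.2 fun k ↦ ?_
    obtain hk | hk := mem_insert.1 (mem_fullFibers.1 h k)
    · exact hk ▸ (mem_sdiff.1 ha).1
    · by_contra hkS
      exact hfib ⟨k, mem_sdiff.2 ⟨mem_of_mem_erase hk, hkS⟩⟩

end FullFibers

theorem card_insert_erase_of_mem_of_notMem {α : Type*} [DecidableEq α] {s : Finset α}
    {a b : α} (ha : a ∈ s) (hb : b ∉ s) : #(insert b (s.erase a)) = #s := by
  rw [card_insert_of_notMem fun h ↦ hb (mem_of_mem_erase h), card_erase_add_one ha]

theorem stmt_2_general {V : Type*} [Fintype V] [DecidableEq V] (n : ℕ)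
    (w : V → ℝ) (hw : ∀ v, 0 ≤ w v) (r : ℕ) (hr : r ≤ n * Fintype.card V)
    (f : Finset (V × Fin n) → WithTop ℝ)
    (hf : ∀ S : Finset (V × Fin n), f S =
      if S.card = r then
        ((∑ v ∈ Finset.univ.filter (fun v : V => ∀ i : Fin n, (v, i) ∈ S), w v : ℝ) : WithTop ℝ)
      else ⊤) :
    (∃ S : Finset (V × Fin n), f S ≠ ⊤) ∧
    (∀ S T : Finset (V × Fin n), S.card = r → T.card = r → ∀ a ∈ S \ T, ∃ b ∈ T \ S,
      f (insert b (S.erase a)) + f (insert a (T.erase b)) ≤ f S + f T) := by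
  have hf_card {S : Finset (V × Fin n)} (hS : #S = r) : f S = ↑(∑ v ∈ fullFibers S, w v) := by
    rw [hf, if_pos hS]
    unfold fullFibers
    congr -- the two filters use different `Decidable` instances
  constructor
  · have hr' : r ≤ #(univ : Finset (V × Fin n)) := by
      rwa [card_univ, Fintype.card_prod, Fintype.card_fin, mul_comm]
    obtain ⟨S, -, hS⟩ := exists_subset_card_eq hr'
    exact ⟨S, by simp [hf_card hS]⟩
  · intro S T hS hT a ha
    obtain ⟨b, hb, hle⟩ := exists_exchange_sum_fullFibers_le hw (hS.trans hT.symm) ha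
    obtain ⟨haS, haT⟩ := mem_sdiff.1 ha
    obtain ⟨hbT, hbS⟩ := mem_sdiff.1 hb
    refine ⟨b, hb, ?_⟩
    rw [hf_card hS, hf_card hT, hf_card (by rwa [card_insert_erase_of_mem_of_notMem haS hbS]),
      hf_card (by rwa [card_insert_erase_of_mem_of_notMem hbT haT])]
    exact_mod_cast hle

/-- the function `S ↦ w(⋂ᵢ Xᵢ(S))` restricted to `r`-element subsets of the
disjoint union of `n` copies of `V` is a valuated matroid when `w ≥ 0`. -/
theorem stmt_2 {V : Type*} [Fintype V] [DecidableEq V] (n : ℕ) (hn : 1 ≤ n)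
    (w : V → ℝ) (hw : ∀ v, 0 ≤ w v) (r : ℕ) (hr : r ≤ n * Fintype.card V)
    (f : Finset (V × Fin n) → WithTop ℝ)
    (hf : ∀ S : Finset (V × Fin n), f S =
      if S.card = r then
        ((∑ v ∈ Finset.univ.filter (fun v : V => ∀ i : Fin n, (v, i) ∈ S), w v : ℝ) : WithTop ℝ)
      else ⊤) :
    (∃ S : Finset (V × Fin n), f S ≠ ⊤) ∧
    (∀ S T : Finset (V × Fin n), S.card = r → T.card = r → ∀ a ∈ S \ T, ∃ b ∈ T \ S,
      f (insert b (S.erase a)) + f (insert a (T.erase b)) ≤ f S + f T) :=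
  stmt_2_general n w hw r hr f hf
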